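/- arXiv:2208.01763 — 2 statements merged into one kernel-verified Lean document; each statement's English description precedes it below -/
import Mathlib

section
/- Let R be a commutative Noetherian ring, A a standard graded R-algebra, and 𝔞 an ideal of R contained in the Jacobson radical of R. Let R̂ and be the 𝔞-adic completions of R and A, respectively. Then is a standard graded R̂-algebra and rt_{R̂}(Â) = rt_R(A). -/
/-!
The adic completion `R̂` of a Noetherian ring at an ideal inside the Jacobson radical is faithfully
flat over `R`, and the grading of `Â = R̂ ⊗[R] A` is the base change of that of `A`. If `Q ⊆ R[T]`
is the presentation ideal of `A`, flatness identifies the presentation ideal of `Â` with the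
extension `Q R̂[T]`, and, since flat base change commutes with intersections of submodules, the
elements of total degree `≤ ℓ` of `Q R̂[T]` are generated by those of `Q`. Faithful flatness makes
`I ↦ I R̂[T]` injective on ideals of `R[T]`, so `Q` is generated in degrees `≤ ℓ` exactly when
`Q R̂[T]` is.
-/

open MvPolynomial TensorProduct

/-- The ideal generated by the elements of `Q` of total degree at most `ℓ`. -/
noncomputable def Ideal.degLE {σ R : Type*} [CommRing R] (Q : Ideal (MvPolynomial σ R)) (ℓ : ℕ) :
    Ideal (MvPolynomial σ R) :=
  Ideal.span {q | q ∈ Q ∧ q.totalDegree ≤ ℓ}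

/-- The relation type of a presentation ideal `Q`. -/
noncomputable def relTypeKer {σ R : Type*} [CommRing R] (Q : Ideal (MvPolynomial σ R)) : ℕ :=
  sInf {ℓ : ℕ | 1 ≤ ℓ ∧ Q.degLE ℓ = Q}

/-- The relation type `rt_R(A)` with respect to the degree-one generating family `f`. -/
noncomputable def relType (R : Type*) {A : Type*} [CommRing R] [CommRing A] [Algebra R A]
    {ι : Type*} (f : ι → A) : ℕ :=
  relTypeKer (RingHom.ker (MvPolynomial.aeval f : MvPolynomial ι R →ₐ[R] A))

namespace Submodule

section Flat

variable {R S M : Type*} [CommRing R] [CommRing S] [Algebra R S] [Module.Flat R S]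
  [AddCommGroup M] [Module R M]

theorem baseChange_inf (p q : Submodule R M) :
    (p ⊓ q).baseChange S = p.baseChange S ⊓ q.baseChange S := by
  refine le_antisymm (le_inf (baseChange_mono S inf_le_left) (baseChange_mono S inf_le_right)) ?_
  rintro - ⟨⟨y, rfl⟩, ⟨z, hz⟩⟩
  -- `y` is killed by `S ⊗ (p → M ⧸ q)`, whose kernel is `S ⊗ (p ⊓ q)` by flatness.
  set π := q.mkQ ∘ₗ p.subtype
  have hq : q.mkQ ∘ₗ q.subtype = 0 := by ext; simp
  have hy : y ∈ LinearMap.ker (π.baseChange S) := by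
    rw [LinearMap.mem_ker, LinearMap.baseChange_comp, LinearMap.comp_apply, ← hz,
      ← LinearMap.comp_apply, ← LinearMap.baseChange_comp, hq, LinearMap.baseChange_zero,
      LinearMap.zero_apply]
  obtain ⟨w, rfl⟩ := (Module.Flat.ker_lTensor_eq S S π).le hy
  let g := (p.subtype ∘ₗ (LinearMap.ker π).subtype).codRestrict (p ⊓ q)
    fun x ↦ ⟨(x : p).2, (Quotient.mk_eq_zero q).mp x.2⟩
  refine ⟨g.baseChange S w, ?_⟩
  rw [← LinearMap.comp_apply, ← LinearMap.baseChange_comp,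
    show (p ⊓ q).subtype ∘ₗ g = p.subtype ∘ₗ (LinearMap.ker π).subtype from
      LinearMap.subtype_comp_codRestrict .., LinearMap.baseChange_comp]
  rfl

end Flat

section Algebra

variable {R S A : Type*} [CommRing R] [CommRing S] [Algebra R S] [CommRing A] [Algebra R A]

theorem baseChange_one : (1 : Submodule R A).baseChange S = 1 := by
  rw [one_eq_span, baseChange_span, Set.image_singleton, one_eq_span]
  rfl

theorem baseChange_mul (p q : Submodule R A) :
    (p * q).baseChange S = p.baseChange S * q.baseChange S := by
  rw [← span_eq p, ← span_eq q, span_mul_span, baseChange_span, baseChange_span, baseChange_span,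
    span_mul_span]
  congr 1
  exact Set.image_mul (Algebra.TensorProduct.includeRight : A →ₐ[R] S ⊗[R] A)

end Algebra

end Submodule

namespace MvPolynomial

variable {R S σ : Type*} [CommRing R] [CommRing S] [Algebra R S]

theorem map_baseChange_eq_span (p : Submodule R (MvPolynomial σ R)) :
    (p.baseChange S).map (algebraTensorAlgEquiv R S).toLinearMap =
      Submodule.span S (map (algebraMap R S) '' p) := by
  rw [Submodule.baseChange_eq_span, Submodule.map_span, Submodule.map_coe, ← Set.image_comp]
  congr 2
  ext q
  simp [algebraTensorAlgEquiv_tmul]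

theorem map_baseChange_restrictSupport (s : Set (σ →₀ ℕ)) :
    ((restrictSupport R s).baseChange S).map (algebraTensorAlgEquiv R S).toLinearMap =
      restrictSupport S s := by
  rw [restrictSupport_eq_span, Submodule.baseChange_span, Submodule.map_span, ← Set.image_comp,
    ← Set.image_comp, restrictSupport_eq_span]
  congr 2
  ext n
  simp [algebraTensorAlgEquiv_tmul]

theorem restrictScalars_ideal_map_eq_map_baseChange (I : Ideal (MvPolynomial σ R)) :
    (I.map (map (algebraMap R S))).restrictScalars S =
      ((I.restrictScalars R).baseChange S).map (algebraTensorAlgEquiv R S).toLinearMap := by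
  have hφ : I.map (map (algebraMap R S)) = (I.map (Algebra.TensorProduct.includeRight
      (R := R) (A := S) (B := MvPolynomial σ R)).toRingHom).map
        (algebraTensorAlgEquiv R S (σ := σ)).toRingHom := by
    rw [Ideal.map_map]
    congr 1
    ext x <;> simp [algebraTensorAlgEquiv_tmul]
  have hJ := TensorProduct.AlgebraTensorModule.range_lTensor_idealMap (R := R) S S I
  ext x
  rw [Submodule.restrictScalars_mem, hφ]
  change _ ∈ Ideal.map (algebraTensorAlgEquiv R S) _ ↔ _
  rw [Ideal.mem_map_of_equiv, Submodule.mem_map]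
  exact exists_congr fun y ↦ and_congr_left' (SetLike.ext_iff.mp hJ y).symm

theorem ideal_map_injective_of_faithfullyFlat [Module.FaithfullyFlat R S] :
    Function.Injective (Ideal.map (map (algebraMap R S)) :
      Ideal (MvPolynomial σ R) → Ideal (MvPolynomial σ S)) := by
  intro I J h
  have h' := congrArg (Submodule.restrictScalars S) h
  simp only [restrictScalars_ideal_map_eq_map_baseChange] at h'
  exact Submodule.restrictScalars_injective R _ _ <| Submodule.baseChange_injective <|
    Submodule.map_injective_of_injective (algebraTensorAlgEquiv R S).injective h'

variable {A : Type*} [CommRing A] [Algebra R A]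

theorem aeval_one_tmul_algebraTensorAlgEquiv (g : σ → A) (x : S ⊗[R] MvPolynomial σ R) :
    aeval (fun i ↦ (1 : S) ⊗ₜ[R] g i) (algebraTensorAlgEquiv R S x) =
      AlgebraTensorModule.lTensor S S (aeval g).toLinearMap x := by
  induction x using TensorProduct.induction_on with
  | zero => simp
  | tmul s p =>
    rw [algebraTensorAlgEquiv_tmul, map_smul, aeval_map_algebraMap, aeval_one_tmul,
      smul_tmul', smul_eq_mul, mul_one, AlgebraTensorModule.lTensor_tmul, AlgHom.toLinearMap_apply]
  | add x y hx hy => simp only [map_add, hx, hy]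

theorem ker_aeval_one_tmul [Module.Flat R S] (g : σ → A) :
    RingHom.ker (aeval fun i ↦ (1 : S) ⊗ₜ[R] g i : MvPolynomial σ S →ₐ[S] S ⊗[R] A) =
      (RingHom.ker (aeval g : MvPolynomial σ R →ₐ[R] A)).map (map (algebraMap R S)) := by
  refine Submodule.restrictScalars_injective S _ _ ?_
  rw [restrictScalars_ideal_map_eq_map_baseChange]
  ext x
  obtain ⟨y, rfl⟩ := (algebraTensorAlgEquiv R S).surjective x
  rw [Submodule.restrictScalars_mem, RingHom.mem_ker, aeval_one_tmul_algebraTensorAlgEquiv,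
    ← LinearMap.mem_ker, Module.Flat.ker_lTensor_eq, ← AlgEquiv.toLinearEquiv_toLinearMap,
    Submodule.mem_map_equiv, AlgEquiv.coe_symm_toLinearEquiv, AlgEquiv.symm_apply_apply]
  rfl

end MvPolynomial

namespace Ideal

variable {R S σ : Type*} [CommRing R] [CommRing S] [Algebra R S]

theorem degLE_eq_span_inf (Q : Ideal (MvPolynomial σ R)) (ℓ : ℕ) :
    Q.degLE ℓ = span ↑(Q.restrictScalars R ⊓ restrictTotalDegree σ R ℓ) := by
  rw [degLE]
  congr 1
  ext q
  simp [mem_restrictTotalDegree]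

theorem degLE_map [Module.Flat R S] (I : Ideal (MvPolynomial σ R)) (ℓ : ℕ) :
    (I.map (MvPolynomial.map (algebraMap R S))).degLE ℓ =
      (I.degLE ℓ).map (MvPolynomial.map (algebraMap R S)) := by
  have key : (I.map (MvPolynomial.map (algebraMap R S))).restrictScalars S ⊓
      restrictTotalDegree σ S ℓ = Submodule.span S (MvPolynomial.map (algebraMap R S) ''
        ↑(I.restrictScalars R ⊓ restrictTotalDegree σ R ℓ)) := by
    rw [MvPolynomial.restrictScalars_ideal_map_eq_map_baseChange, restrictTotalDegree,
      ← MvPolynomial.map_baseChange_restrictSupport (R := R), ← Submodule.map_inf _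
        (algebraTensorAlgEquiv R S).injective, ← Submodule.baseChange_inf,
      MvPolynomial.map_baseChange_eq_span]
    rfl
  rw [degLE_eq_span_inf, degLE_eq_span_inf, key, map_span, Ideal.span,
    Submodule.span_span_of_tower]

end Ideal

theorem relTypeKer_map {R S σ : Type*} [CommRing R] [CommRing S] [Algebra R S]
    [Module.FaithfullyFlat R S] (I : Ideal (MvPolynomial σ R)) :
    relTypeKer (I.map (MvPolynomial.map (algebraMap R S))) = relTypeKer I := by
  simp only [relTypeKer, Ideal.degLE_map, MvPolynomial.ideal_map_injective_of_faithfullyFlat.eq_iff]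

theorem relType_one_tmul {R S A ι : Type*} [CommRing R] [CommRing S] [Algebra R S]
    [Module.FaithfullyFlat R S] [CommRing A] [Algebra R A] (f : ι → A) :
    relType S (fun i ↦ (1 : S) ⊗ₜ[R] f i) = relType R f := by
  rw [relType, relType, MvPolynomial.ker_aeval_one_tmul, relTypeKer_map]

theorem AdicCompletion.faithfullyFlat_of_le_jacobson {R : Type*} [CommRing R] [IsNoetherianRing R]
    {𝔞 : Ideal R} (h𝔞 : 𝔞 ≤ (⊥ : Ideal R).jacobson) :
    Module.FaithfullyFlat R (AdicCompletion 𝔞 R) where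
  submodule_ne_top 𝔪 h𝔪 htop := by
    have hker : RingHom.ker (Ideal.Quotient.mk (𝔞 ^ 1)) ≤ 𝔪 := by
      rw [Ideal.mk_ker, pow_one]
      exact h𝔞.trans (sInf_le ⟨bot_le, h𝔪⟩)
    refine (Ideal.IsMaximal.map_of_surjective_of_ker_le Ideal.Quotient.mk_surjective hker).ne_top ?_
    rw [Ideal.smul_top_eq_map, Submodule.restrictScalars_eq_top_iff] at htop
    have := congrArg (Ideal.map (evalₐ 𝔞 1 : AdicCompletion 𝔞 R →+* R ⧸ 𝔞 ^ 1)) htop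
    rwa [Ideal.map_top, Ideal.map_map, AlgHom.comp_algebraMap] at this

theorem relation_type_statement_5_general
    {R A : Type*} [CommRing R] [IsNoetherianRing R] [CommRing A] [Algebra R A]
    (𝒜 : ℕ → Submodule R A) [GradedAlgebra 𝒜]
    (h0 : 𝒜 0 = (1 : Submodule R A))
    (hstd : ∀ n : ℕ, 𝒜 (n + 1) = 𝒜 1 * 𝒜 n)
    {m : ℕ} (f : Fin m → A) (hf : Submodule.span R (Set.range f) = 𝒜 1)
    (𝔞 : Ideal R) (hjac : 𝔞 ≤ (⊥ : Ideal R).jacobson) :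
    (∃ ℬ : ℕ → Submodule (AdicCompletion 𝔞 R) (AdicCompletion 𝔞 R ⊗[R] A),
      ∃ _ : GradedAlgebra ℬ,
        ℬ 0 = 1 ∧ (ℬ 1).FG ∧ (∀ n : ℕ, ℬ (n + 1) = ℬ 1 * ℬ n) ∧
        Submodule.span (AdicCompletion 𝔞 R)
          (Set.range fun i : Fin m =>
            ((1 : AdicCompletion 𝔞 R) ⊗ₜ[R] f i : AdicCompletion 𝔞 R ⊗[R] A)) = ℬ 1)
    ∧ relType (AdicCompletion 𝔞 R)
        (fun i : Fin m =>
          ((1 : AdicCompletion 𝔞 R) ⊗ₜ[R] f i : AdicCompletion 𝔞 R ⊗[R] A))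
      = relType R f := by
  have := AdicCompletion.faithfullyFlat_of_le_jacobson hjac
  have hspan : Submodule.span (AdicCompletion 𝔞 R)
      (Set.range fun i ↦ (1 : AdicCompletion 𝔞 R) ⊗ₜ[R] f i) =
        (𝒜 1).baseChange (AdicCompletion 𝔞 R) := by
    rw [← hf, Submodule.baseChange_span, ← Set.range_comp]
    rfl
  refine ⟨⟨fun n ↦ (𝒜 n).baseChange _, GradedAlgebra.baseChange 𝒜, ?_, ?_, fun n ↦ ?_, hspan⟩,
    relType_one_tmul f⟩
  · dsimp only
    rw [h0, Submodule.baseChange_one]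
  · dsimp only
    rw [← hspan]
    exact Submodule.fg_span (Set.finite_range _)
  · dsimp only
    rw [hstd, Submodule.baseChange_mul]

/-- Let `R` be a commutative Noetherian ring, `A` a standard graded
`R`-algebra, and `𝔞` an ideal of `R` contained in the Jacobson radical of `R`.  Let
`R̂ = AdicCompletion 𝔞 R` be the `𝔞`-adic completion of `R` and `Â = R̂ ⊗_R A` the
`𝔞`-adic completion of the (standard graded, degreewise finitely generated) algebra `A`.
Then `Â` is a standard graded `R̂`-algebra and `rt_{R̂}(Â) = rt_R(A)`. -/
theorem relation_type_statement_5
    {R A : Type*} [CommRing R] [IsNoetherianRing R] [CommRing A] [Algebra R A]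
    (𝒜 : ℕ → Submodule R A) [GradedAlgebra 𝒜]
    (h0 : 𝒜 0 = (1 : Submodule R A)) (hfg : (𝒜 1).FG)
    (hstd : ∀ n : ℕ, 𝒜 (n + 1) = 𝒜 1 * 𝒜 n)
    {m : ℕ} (f : Fin m → A) (hf : Submodule.span R (Set.range f) = 𝒜 1)
    (𝔞 : Ideal R) (hjac : 𝔞 ≤ (⊥ : Ideal R).jacobson) :
    (∃ ℬ : ℕ → Submodule (AdicCompletion 𝔞 R) (AdicCompletion 𝔞 R ⊗[R] A),
      ∃ _ : GradedAlgebra ℬ,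
        ℬ 0 = 1 ∧ (ℬ 1).FG ∧ (∀ n : ℕ, ℬ (n + 1) = ℬ 1 * ℬ n) ∧
        Submodule.span (AdicCompletion 𝔞 R)
          (Set.range fun i : Fin m =>
            ((1 : AdicCompletion 𝔞 R) ⊗ₜ[R] f i : AdicCompletion 𝔞 R ⊗[R] A)) = ℬ 1)
    ∧ relType (AdicCompletion 𝔞 R)
        (fun i : Fin m =>
          ((1 : AdicCompletion 𝔞 R) ⊗ₜ[R] f i : AdicCompletion 𝔞 R ⊗[R] A))
      = relType R f :=
  relation_type_statement_5_general 𝒜 h0 hstd f hf 𝔞 hjac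
end

section
/- Let R be a commutative Noetherian ring and I an ideal of R. Then the relation type of the Rees algebra of I equals the relation type of the associated graded ring of I: rt_R(R(I)) = rt_{R/I}(gr_I(R)). -/
open MvPolynomial Polynomial

/-!
Let `Q` be the kernel of `X i ↦ g i • t`, `Q̄` its image in `(R/I)[X]`, and `Q_{≤ℓ}` the ideal
generated by the elements of `Q` of degree `≤ ℓ`. Since `Q` is homogeneous, `Q̄_{≤ℓ}` is the image
of `Q_{≤ℓ}`; hence `Q = Q_{≤ℓ}` implies `Q̄ = Q̄_{≤ℓ}`, and `Q̄ = Q̄_{≤ℓ}` means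
`Q ⊆ Q_{≤ℓ} + I·R[X]`.

In the latter case suppose `Q = Q_{≤n+1}` with `n ≥ ℓ` (true for large `n`, as `Q` is finitely
generated). Write `q ∈ Q` as `q₀ + r` with `q₀ ∈ Q_{≤ℓ}` and `r = ∑ c_u g_u ∈ Q`. Then
`H = ∑ c_u X_u ∈ Q`, and `r ≡ lower H` modulo the Koszul relations `g_u X_v - g_v X_u ∈ Q_{≤1}`,
where `lower` trades one variable `X_i` of each monomial for `g_i`. As `lower` maps `Q` into `Q`,
lowers degrees by one and is `R[X]`-linear on `Q` modulo the Koszul relations, it maps `Q_{≤n+1}`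
into `Q_{≤n}`, so `Q = Q_{≤n}`; descending induction ends at `Q = Q_{≤ℓ}`.
-/

lemma Finsupp.sub_single_one_add_single_one {σ : Type*} {α : σ →₀ ℕ} {i : σ} (hi : α i ≠ 0) :
    α - single i 1 + single i 1 = α :=
  tsub_add_cancel_of_le (single_le_iff.mpr (Nat.one_le_iff_ne_zero.mpr hi))

lemma MvPolynomial.map_homogeneousComponent {R S σ : Type*} [CommRing R] [CommRing S]
    (f : R →+* S) (n : ℕ) (p : MvPolynomial σ R) :
    map f (homogeneousComponent n p) = homogeneousComponent n (map f p) := by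
  ext d
  simp only [coeff_map, coeff_homogeneousComponent, apply_ite f, map_zero]

lemma MvPolynomial.totalDegree_map_le {R S σ : Type*} [CommRing R] [CommRing S]
    (f : R →+* S) (p : MvPolynomial σ R) : (map f p).totalDegree ≤ p.totalDegree :=
  Finset.sup_mono (support_map_subset f p)

namespace Ideal

variable {R S σ : Type*} [CommRing R] [CommRing S]

lemma degLE_le (Q : Ideal (MvPolynomial σ R)) (ℓ : ℕ) : Q.degLE ℓ ≤ Q :=
  span_le.mpr fun _ hq => hq.1

lemma degLE_mono (Q : Ideal (MvPolynomial σ R)) {ℓ ℓ' : ℕ} (h : ℓ ≤ ℓ') :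
    Q.degLE ℓ ≤ Q.degLE ℓ' :=
  span_mono fun _ hq => ⟨hq.1, hq.2.trans h⟩

lemma degLE_eq_of_le {Q : Ideal (MvPolynomial σ R)} {ℓ ℓ' : ℕ} (h : ℓ ≤ ℓ')
    (hQ : Q.degLE ℓ = Q) : Q.degLE ℓ' = Q :=
  (Q.degLE_le ℓ').antisymm (hQ.symm.le.trans (Q.degLE_mono h))

lemma exists_degLE_eq_of_fg {Q : Ideal (MvPolynomial σ R)} (hQ : Q.FG) :
    ∃ L, Q.degLE L = Q := by
  obtain ⟨s, rfl⟩ := hQ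
  refine ⟨s.sup totalDegree, (degLE_le _ _).antisymm (span_le.mpr fun f hf => ?_)⟩
  exact subset_span ⟨subset_span hf, Finset.le_sup hf⟩

lemma degLE_map_s9 {f : R →+* S} (hf : Function.Surjective f) {Q : Ideal (MvPolynomial σ R)}
    (hQ : ∀ q ∈ Q, ∀ n, homogeneousComponent n q ∈ Q) (ℓ : ℕ) :
    (Q.map (MvPolynomial.map f)).degLE ℓ = (Q.degLE ℓ).map (MvPolynomial.map f) := by
  refine le_antisymm (span_le.mpr ?_) ?_
  · rintro _ ⟨hq', hdeg⟩
    obtain ⟨q, hq, rfl⟩ := (mem_map_iff_of_surjective _ (map_surjective f hf)).mp hq'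
    rw [← sum_homogeneousComponent (MvPolynomial.map f q), SetLike.mem_coe]
    refine _root_.sum_mem fun n hn => ?_
    rw [← map_homogeneousComponent]
    refine mem_map_of_mem _ (subset_span ⟨hQ q hq n, ?_⟩)
    exact (homogeneousComponent_isHomogeneous n q).totalDegree_le.trans
      (Nat.lt_succ_iff.mp (Finset.mem_range.mp hn) |>.trans hdeg)
  · rw [degLE, map_span, span_le]
    rintro _ ⟨q, ⟨hq, hdeg⟩, rfl⟩
    exact subset_span ⟨mem_map_of_mem _ hq, (totalDegree_map_le f q).trans hdeg⟩

lemma le_degLE_sup_of_map_degLE_eq {f : R →+* S} (hf : Function.Surjective f)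
    {Q : Ideal (MvPolynomial σ R)}
    (hQ : ∀ q ∈ Q, ∀ n, homogeneousComponent n q ∈ Q) {ℓ : ℕ}
    (h : (Q.map (MvPolynomial.map f)).degLE ℓ = Q.map (MvPolynomial.map f)) :
    Q ≤ Q.degLE ℓ ⊔ map MvPolynomial.C (RingHom.ker f) := by
  intro q hq
  have hmap : MvPolynomial.map f q ∈ (Q.degLE ℓ).map (MvPolynomial.map f) := by
    rw [← degLE_map_s9 hf hQ, h]
    exact mem_map_of_mem _ hq
  rwa [← mem_comap, comap_map_of_surjective _ (map_surjective f hf),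
    ← RingHom.ker_eq_comap_bot, ker_map] at hmap

end Ideal

namespace MvPolynomial

variable {R σ : Type*} [CommRing R] (g : σ → R)

noncomputable def reesPresentation : MvPolynomial σ R →ₐ[R] R[X] :=
  aeval fun i => Polynomial.C (g i) * Polynomial.X

noncomputable abbrev reesIdeal : Ideal (MvPolynomial σ R) :=
  RingHom.ker (reesPresentation g)

lemma reesPresentation_monomial (α : σ →₀ ℕ) (a : R) :
    reesPresentation g (monomial α a) =
      Polynomial.C (eval g (monomial α a)) * Polynomial.X ^ α.degree := by
  simp only [reesPresentation, aeval_monomial, eval_monomial, Finsupp.prod, mul_pow,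
    Finset.prod_mul_distrib, Polynomial.algebraMap_eq, ← Polynomial.C_pow, ← map_prod,
    Finset.prod_pow_eq_pow_sum, Finsupp.degree_apply, map_mul, mul_assoc]

lemma coeff_reesPresentation (p : MvPolynomial σ R) (d : ℕ) :
    (reesPresentation g p).coeff d = eval g (homogeneousComponent d p) := by
  induction p using MvPolynomial.induction_on' with
  | monomial α a =>
    rw [reesPresentation_monomial, Polynomial.coeff_C_mul_X_pow,
      homogeneousComponent_of_mem (isHomogeneous_monomial a rfl)]
    by_cases h : α.degree = d
    · simp [h]
    · simp [Ne.symm h]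
  | add p q hp hq => simp only [map_add, Polynomial.coeff_add, hp, hq]

lemma mem_reesIdeal_iff {p : MvPolynomial σ R} :
    p ∈ reesIdeal g ↔ ∀ d, eval g (homogeneousComponent d p) = 0 := by
  simp only [RingHom.mem_ker, Polynomial.ext_iff, coeff_reesPresentation, Polynomial.coeff_zero]

lemma homogeneousComponent_mem_reesIdeal :
    ∀ p ∈ reesIdeal g, ∀ n, homogeneousComponent n p ∈ reesIdeal g := by
  intro p hp n
  rw [mem_reesIdeal_iff] at hp ⊢
  intro d
  rw [homogeneousComponent_of_mem (homogeneousComponent_mem n p)]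
  split_ifs
  · exact hp n
  · exact map_zero _

lemma coeff_zero_of_mem_reesIdeal {p : MvPolynomial σ R} (hp : p ∈ reesIdeal g) :
    coeff 0 p = 0 := by
  simpa using (mem_reesIdeal_iff g).mp hp 0

noncomputable def koszulRelations : Ideal (MvPolynomial σ R) :=
  Ideal.span (Set.range fun uv : σ × σ => C (g uv.1) * X uv.2 - C (g uv.2) * X uv.1)

open Classical in
/-- Replaces, in each monomial, one arbitrarily chosen variable `X i` by the coefficient `g i`;
modulo `koszulRelations g` the choice does not matter. -/
noncomputable def lower : MvPolynomial σ R →ₗ[R] MvPolynomial σ R :=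
  (basisMonomials σ R).constr R fun α =>
    if h : ∃ i, α i ≠ 0 then C (g h.choose) * monomial (α - Finsupp.single h.choose 1) 1
    else 0

open Classical in
lemma lower_monomial (α : σ →₀ ℕ) (a : R) :
    lower g (monomial α a) = if h : ∃ i, α i ≠ 0 then
      C (g h.choose) * monomial (α - Finsupp.single h.choose 1) a else 0 := by
  have : monomial α a = a • basisMonomials σ R α := by
    rw [coe_basisMonomials, smul_monomial, smul_eq_mul, mul_one]
  rw [this, map_smul, lower, Module.Basis.constr_basis]
  split_ifs
  · rw [← mul_smul_comm, smul_monomial, smul_eq_mul, mul_one]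
  · rw [smul_zero]

variable {g}

lemma C_mul_monomial_sub_mem_koszulRelations {β : σ →₀ ℕ} {u v : σ} (hu : β u ≠ 0)
    (hv : β v ≠ 0) (a : R) :
    C (g u) * monomial (β - Finsupp.single u 1) a - C (g v) * monomial (β - Finsupp.single v 1) a
      ∈ koszulRelations g := by
  obtain rfl | huv := eq_or_ne u v
  · simp
  have hvu : (β - Finsupp.single u 1 : σ →₀ ℕ) v ≠ 0 := by
    simpa [Finsupp.single_apply, huv] using hv
  have huv' : (β - Finsupp.single v 1 : σ →₀ ℕ) u ≠ 0 := by
    simpa [Finsupp.single_apply, huv.symm] using hu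
  have key : C (g u) * monomial (β - Finsupp.single u 1) a
      - C (g v) * monomial (β - Finsupp.single v 1) a
      = monomial (β - Finsupp.single v 1 - Finsupp.single u 1) a
        * (C (g u) * X v - C (g v) * X u) := by
    conv_lhs => rw [← Finsupp.sub_single_one_add_single_one hvu,
      ← Finsupp.sub_single_one_add_single_one huv', tsub_right_comm]
    simp only [monomial_add_single, pow_one]
    ring
  rw [key]
  exact Ideal.mul_mem_left _ _ (Ideal.subset_span ⟨(u, v), rfl⟩)

lemma lower_mul_X_sub_mem_koszulRelations (q : MvPolynomial σ R) (i : σ) :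
    lower g (q * X i) - q * C (g i) ∈ koszulRelations g := by
  induction q using MvPolynomial.induction_on' with
  | monomial α a =>
    have hi : (α + Finsupp.single i 1 : σ →₀ ℕ) i ≠ 0 := by simp
    have hne : ∃ j, (α + Finsupp.single i 1 : σ →₀ ℕ) j ≠ 0 := ⟨i, hi⟩
    rw [← pow_one (X i), ← monomial_add_single, lower_monomial, dif_pos hne, mul_comm _ (C _)]
    convert C_mul_monomial_sub_mem_koszulRelations hne.choose_spec hi a using 3
    simp
  | add p q hp hq =>
    rw [add_mul, map_add, add_mul, add_sub_add_comm]
    exact add_mem hp hq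

lemma koszulRelations_le_reesIdeal : koszulRelations g ≤ reesIdeal g := by
  rw [koszulRelations, Ideal.span_le]
  rintro _ ⟨⟨u, v⟩, rfl⟩
  simp only [SetLike.mem_coe, RingHom.mem_ker, map_sub, map_mul, reesPresentation, aeval_C,
    aeval_X, Polynomial.algebraMap_eq]
  ring

lemma koszulRelations_le_degLE {n : ℕ} (hn : 1 ≤ n) :
    koszulRelations g ≤ (reesIdeal g).degLE n := by
  rw [koszulRelations, Ideal.span_le]
  rintro _ ⟨⟨u, v⟩, rfl⟩
  refine Ideal.subset_span ⟨koszulRelations_le_reesIdeal (Ideal.subset_span ⟨(u, v), rfl⟩), ?_⟩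
  refine (totalDegree_sub _ _).trans (max_le ?_ ?_) <;>
    exact (isHomogeneous_C_mul_X _ _).totalDegree_le.trans hn

lemma lower_mul_sub_mem_koszulRelations {p : MvPolynomial σ R} (hp : p ∈ idealOfVars σ R)
    (b : MvPolynomial σ R) : lower g (b * p) - b * lower g p ∈ koszulRelations g := by
  induction hp using Submodule.span_induction generalizing b with
  | mem _ hx =>
    obtain ⟨i, rfl⟩ := hx
    have h1 := lower_mul_X_sub_mem_koszulRelations (g := g) (1 : MvPolynomial σ R) i
    rw [one_mul, one_mul] at h1
    have key : lower g (b * X i) - b * lower g (X i)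
        = (lower g (b * X i) - b * C (g i)) - b * (lower g (X i) - C (g i)) := by ring
    rw [key]
    exact sub_mem (lower_mul_X_sub_mem_koszulRelations b i) (Ideal.mul_mem_left _ _ h1)
  | zero => simp
  | add x y _ _ hx hy =>
    rw [mul_add, map_add, map_add, mul_add, add_sub_add_comm]
    exact add_mem (hx b) (hy b)
  | smul c x _ hx =>
    have key : lower g (b * (c * x)) - b * lower g (c * x)
        = (lower g (b * c * x) - b * c * lower g x) - b * (lower g (c * x) - c * lower g x) := by
      rw [mul_assoc b c x]; ring
    rw [smul_eq_mul, key]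
    exact sub_mem (hx (b * c)) (Ideal.mul_mem_left _ _ (hx c))

lemma reesPresentation_lower_mul_X {p : MvPolynomial σ R} (hp : p ∈ idealOfVars σ R) :
    reesPresentation g (lower g p) * Polynomial.X = reesPresentation g p := by
  induction hp using Submodule.span_induction with
  | mem _ hx =>
    obtain ⟨i, rfl⟩ := hx
    have h := koszulRelations_le_reesIdeal (lower_mul_X_sub_mem_koszulRelations (g := g) 1 i)
    rw [RingHom.mem_ker, map_sub, sub_eq_zero, one_mul, one_mul] at h
    rw [h]
    simp [reesPresentation]
  | zero => simp
  | add x y _ _ hx hy => rw [map_add, map_add, add_mul, hx, hy, map_add]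
  | smul c x hx' hx =>
    have h := koszulRelations_le_reesIdeal (lower_mul_sub_mem_koszulRelations (g := g) hx' c)
    rw [RingHom.mem_ker, map_sub, sub_eq_zero] at h
    rw [smul_eq_mul, h, map_mul, mul_assoc, hx, map_mul]

lemma reesIdeal_le_idealOfVars : reesIdeal g ≤ idealOfVars σ R := by
  intro p hp
  rw [← pow_one (idealOfVars σ R), mem_pow_idealOfVars_iff']
  intro x hx
  rw [Nat.lt_one_iff, Finsupp.degree_eq_zero_iff] at hx
  rw [hx]
  exact coeff_zero_of_mem_reesIdeal g hp

lemma lower_mem_reesIdeal {p : MvPolynomial σ R} (hp : p ∈ reesIdeal g) :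
    lower g p ∈ reesIdeal g := by
  have h := reesPresentation_lower_mul_X (g := g) (reesIdeal_le_idealOfVars hp)
  rw [RingHom.mem_ker] at hp ⊢
  rw [hp] at h
  exact Polynomial.isRegular_X.right (h.trans (zero_mul _).symm)

lemma totalDegree_lower_le {p : MvPolynomial σ R} {d : ℕ} (h : p.totalDegree ≤ d + 1) :
    (lower g p).totalDegree ≤ d := by
  classical
  rw [p.as_sum, map_sum]
  refine totalDegree_finsetSum_le fun α hα => ?_
  rw [lower_monomial]
  split_ifs with hα0
  · have hdeg : (α - Finsupp.single hα0.choose 1).degree + 1 = α.degree := by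
      conv_rhs => rw [← Finsupp.sub_single_one_add_single_one hα0.choose_spec]
      rw [map_add, Finsupp.degree_single]
    have hα' : α.degree ≤ d + 1 := (le_totalDegree hα).trans h
    rw [C_mul_monomial]
    exact (isHomogeneous_monomial _ rfl).totalDegree_le.trans (by omega)
  · simp

lemma lower_mem_degLE {n : ℕ} (hn : 1 ≤ n) {p : MvPolynomial σ R}
    (hp : p ∈ (reesIdeal g).degLE (n + 1)) :
    lower g p ∈ (reesIdeal g).degLE n := by
  induction hp using Submodule.span_induction with
  | mem q hq => exact Ideal.subset_span ⟨lower_mem_reesIdeal hq.1, totalDegree_lower_le hq.2⟩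
  | zero => simp
  | add x y _ _ hx hy => rw [map_add]; exact add_mem hx hy
  | smul b x hx' hx =>
    have hxI := reesIdeal_le_idealOfVars (Ideal.degLE_le _ _ hx')
    rw [smul_eq_mul, ← sub_add_cancel (lower g (b * x)) (b * lower g x)]
    exact add_mem (koszulRelations_le_degLE hn (lower_mul_sub_mem_koszulRelations hxI b))
      (Ideal.mul_mem_left _ _ hx)

lemma exists_mem_reesIdeal_sub_lower_mem_koszulRelations {r : MvPolynomial σ R}
    (hr : r ∈ reesIdeal g) (hrg : r ∈ Ideal.map C (Ideal.span (Set.range g))) :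
    ∃ H ∈ reesIdeal g, r - lower g H ∈ koszulRelations g := by
  rw [Ideal.map_span, ← Set.range_comp, Finsupp.mem_ideal_span_range_iff_exists_finsupp] at hrg
  obtain ⟨c, rfl⟩ := hrg
  refine ⟨c.sum fun i a => a * X i, ?_, ?_⟩
  · have hX : reesPresentation g (c.sum fun i a => a * X i)
        = Polynomial.X * reesPresentation g (c.sum fun i a => a * (C ∘ g) i) := by
      simp only [Finsupp.sum, map_sum, map_mul, Finset.mul_sum, Function.comp_apply,
        reesPresentation, aeval_X, aeval_C, Polynomial.algebraMap_eq]
      exact Finset.sum_congr rfl fun i _ => by ring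
    rw [RingHom.mem_ker] at hr ⊢
    rw [hX, hr, mul_zero]
  · simp only [Finsupp.sum, map_sum, ← Finset.sum_sub_distrib, Function.comp_apply]
    exact sum_mem fun i _ => by
      rw [← neg_mem_iff, neg_sub]
      exact lower_mul_X_sub_mem_koszulRelations _ i

lemma degLE_reesIdeal_eq_of_degLE_succ {n : ℕ} (hn : 1 ≤ n)
    (hsup : reesIdeal g ≤ (reesIdeal g).degLE n ⊔ Ideal.map C (Ideal.span (Set.range g)))
    (h : (reesIdeal g).degLE (n + 1) = reesIdeal g) :
    (reesIdeal g).degLE n = reesIdeal g := by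
  refine (Ideal.degLE_le _ _).antisymm fun q hq => ?_
  obtain ⟨q₀, hq₀, r, hr, rfl⟩ := Submodule.mem_sup.mp (hsup hq)
  have hrQ : r ∈ reesIdeal g := by
    simpa using sub_mem hq (Ideal.degLE_le _ _ hq₀)
  obtain ⟨H, hH, hrH⟩ := exists_mem_reesIdeal_sub_lower_mem_koszulRelations hrQ hr
  rw [← h] at hH
  rw [← sub_add_cancel r (lower g H)]
  exact add_mem hq₀ (add_mem (koszulRelations_le_degLE hn hrH) (lower_mem_degLE hn hH))

theorem degLE_reesIdeal_eq_of_le_sup (hfg : (reesIdeal g).FG)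
    {ℓ : ℕ} (hℓ : 1 ≤ ℓ)
    (hsup : reesIdeal g ≤ (reesIdeal g).degLE ℓ ⊔ Ideal.map C (Ideal.span (Set.range g))) :
    (reesIdeal g).degLE ℓ = reesIdeal g := by
  obtain ⟨L, hL⟩ := Ideal.exists_degLE_eq_of_fg hfg
  refine Nat.decreasingInduction' (fun n _ hℓn ih => ?_) (le_max_right L ℓ)
    (Ideal.degLE_eq_of_le (le_max_left L ℓ) hL)
  exact degLE_reesIdeal_eq_of_degLE_succ (hℓ.trans hℓn)
    (hsup.trans (sup_le_sup_right (Ideal.degLE_mono _ hℓn) _)) ih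

end MvPolynomial

/-- Let `R` be a commutative Noetherian ring and `I` an ideal of `R`,
generated by `g_1,…,g_m`.  The Rees algebra `R(I) = ⊕ I^n t^n ⊆ R[t]` is presented by
`R[T_1,…,T_m] → R[t]`, `T_i ↦ g_i t`, with kernel `Q`, and the associated graded ring
`gr_I(R) = R(I)/I·R(I)` is presented over `R/I` by `(R/I)[T_1,…,T_m]`, with kernel the
image `Q̄` of `Q` in `(R/I)[T_1,…,T_m]`.  Then the relation type of the Rees algebra
equals the relation type of the associated graded ring:
`rt_R(R(I)) = rt_{R/I}(gr_I(R))`. -/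
theorem relation_type_statement_9
    {R : Type*} [CommRing R] [IsNoetherianRing R] (I : Ideal R)
    {m : ℕ} (g : Fin m → R) (hg : Ideal.span (Set.range g) = I)
    (Q : Ideal (MvPolynomial (Fin m) R))
    (hQ : Q = RingHom.ker
      (MvPolynomial.aeval (fun i => Polynomial.C (g i) * Polynomial.X) :
        MvPolynomial (Fin m) R →ₐ[R] Polynomial R)) :
    relTypeKer Q = relTypeKer (Q.map (MvPolynomial.map (Ideal.Quotient.mk I))) := by
  change Q = MvPolynomial.reesIdeal g at hQ
  subst hQ
  have hmk : Function.Surjective (Ideal.Quotient.mk I) := Ideal.Quotient.mk_surjective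
  have hhom := MvPolynomial.homogeneousComponent_mem_reesIdeal g
  unfold relTypeKer
  congr 1
  ext ℓ
  refine and_congr_right fun hℓ => ⟨fun h => ?_, fun h => ?_⟩
  · rw [Ideal.degLE_map_s9 hmk hhom, h]
  · refine MvPolynomial.degLE_reesIdeal_eq_of_le_sup (IsNoetherian.noetherian _) hℓ ?_
    simpa [hg] using Ideal.le_degLE_sup_of_map_degLE_eq hmk hhom h
end
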